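/- For any finite sequence τ of distinct natural numbers and any natural number k not occurring in τ, where kτ denotes the sequence τ with k prepended: lec(kτ) ≥ lec τ; moreover lec(kτ) = lec τ if and only if pix(kτ) = pix τ + 1 (in particular pix(kτ) > 0), and lec(kτ) > lec τ if and only if pix(kτ) = 0. -/

import Mathlib

namespace PaperStats

/-- `des w` is the number of descents of the word `w` (0-indexed positions `i`
with `w(i) > w(i+1)`). -/
def des (w : List ℕ) : ℕ :=
  ((Finset.range (w.length - 1)).filter fun i => w.getD (i + 1) 0 < w.getD i 0).card

/-- `inv w` is the number of inversions of the word `w`: pairs of positions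
`i < j` with `w(i) > w(j)`. -/
def inv (w : List ℕ) : ℕ :=
  ((Finset.range w.length ×ˢ Finset.range w.length).filter
    fun p => p.1 < p.2 ∧ w.getD p.2 0 < w.getD p.1 0).card

/-- An inversion `(i,j)` of `w` is admissible if either `w(j) < w(j+1)`
(`j` is not the last position and is followed by an ascent), or there is a
position `k` strictly between `i` and `j` with `w(j) > w(k)`. -/
def IsAdmissible (w : List ℕ) (i j : ℕ) : Prop :=
  (j + 1 < w.length ∧ w.getD j 0 < w.getD (j + 1) 0) ∨
    ∃ k, i < k ∧ k < j ∧ w.getD k 0 < w.getD j 0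

instance (w : List ℕ) (i j : ℕ) : Decidable (IsAdmissible w i j) :=
  decidable_of_iff ((j + 1 < w.length ∧ w.getD j 0 < w.getD (j + 1) 0) ∨
      ∃ k ∈ Finset.Ioo i j, w.getD k 0 < w.getD j 0) (by
    unfold IsAdmissible
    simp only [Finset.mem_Ioo, and_assoc])

/-- `ai w` is the number of admissible inversions of `w`. -/
def ai (w : List ℕ) : ℕ :=
  ((Finset.range w.length ×ˢ Finset.range w.length).filter
    fun p => p.1 < p.2 ∧ w.getD p.2 0 < w.getD p.1 0 ∧ IsAdmissible w p.1 p.2).card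

/-- `aid w = ai w + des w`. -/
def aid (w : List ℕ) : ℕ := ai w + des w

/-- The statistic `aix`, defined recursively: `aix ∅ = 0`; writing a nonempty
word as `π = α m β`, where `m` is the smallest letter and `α` is the maximal
prefix not containing `m`, one has `aix π = 1 + aix β` if `α = ∅`,
`aix π = 0` if `β = ∅` (and `α ≠ ∅`), and `aix π = aix α` otherwise. -/
def aix : List ℕ → ℕ
  | [] => 0
  | x :: xs =>
    if (x :: xs).takeWhile (fun a => decide (a ≠ xs.foldr min x)) = [] then
      1 + aix (((x :: xs).dropWhile (fun a => decide (a ≠ xs.foldr min x))).tail)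
    else if ((x :: xs).dropWhile (fun a => decide (a ≠ xs.foldr min x))).tail = [] then 0
    else aix ((x :: xs).takeWhile (fun a => decide (a ≠ xs.foldr min x)))
termination_by w => w.length
decreasing_by
  all_goals simp only [List.foldr_attach] at *
  · have h1 := (List.dropWhile_sublist (l := x :: xs) (fun a => decide (a ≠ xs.foldr min x))).length_le
    have h2 := List.length_tail (l := (x :: xs).dropWhile (fun a => decide (a ≠ xs.foldr min x)))
    simp only [List.length_cons] at *
    omega
  · rename_i hα hβ
    have h0 : ((x :: xs).takeWhile (fun a => decide (a ≠ xs.foldr min x))) ++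
        ((x :: xs).dropWhile (fun a => decide (a ≠ xs.foldr min x))) = x :: xs :=
      List.takeWhile_append_dropWhile ..
    have h1 : ((x :: xs).dropWhile (fun a => decide (a ≠ xs.foldr min x))) ≠ [] := by
      intro h
      apply hβ
      rw [h]
      rfl
    have h2 := congrArg List.length h0
    simp only [List.length_append, List.length_cons] at h2
    have h3 : 0 < ((x :: xs).dropWhile (fun a => decide (a ≠ xs.foldr min x))).length :=
      List.length_pos_iff.mpr h1
    simp only [List.length_cons]
    omega

/-- The map `f(k,τ)`: with `m` the smallest letter of `τ` together with `k`
(`k` not occurring in `τ`), and `τ = α m β` with `α` the maximal prefix of `τ`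
avoiding `m`: `f(k,∅) = k`; `f(k,τ) = kτ` if `k = m`; and for `k > m`,
`f(k,τ) = f(k,β) m` if `α = ∅`, `f(k,τ) = k m α` if `β = ∅`, and
`f(k,τ) = f(k,α) m β` otherwise. -/
def fkt (k : ℕ) : List ℕ → List ℕ
  | [] => [k]
  | x :: xs =>
    if k < xs.foldr min x then k :: x :: xs
    else if (x :: xs).takeWhile (fun a => decide (a ≠ xs.foldr min x)) = [] then
      fkt k (((x :: xs).dropWhile (fun a => decide (a ≠ xs.foldr min x))).tail) ++
        [xs.foldr min x]
    else if ((x :: xs).dropWhile (fun a => decide (a ≠ xs.foldr min x))).tail = [] then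
      k :: xs.foldr min x :: ((x :: xs).takeWhile (fun a => decide (a ≠ xs.foldr min x)))
    else
      fkt k ((x :: xs).takeWhile (fun a => decide (a ≠ xs.foldr min x))) ++
        xs.foldr min x :: ((x :: xs).dropWhile (fun a => decide (a ≠ xs.foldr min x))).tail
termination_by w => w.length
decreasing_by
  all_goals simp only [List.foldr_attach] at *
  · have h1 := (List.dropWhile_sublist (l := x :: xs) (fun a => decide (a ≠ xs.foldr min x))).length_le
    have h2 := List.length_tail (l := (x :: xs).dropWhile (fun a => decide (a ≠ xs.foldr min x)))
    simp only [List.length_cons] at *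
    omega
  · rename_i hk hα hβ
    have h0 : ((x :: xs).takeWhile (fun a => decide (a ≠ xs.foldr min x))) ++
        ((x :: xs).dropWhile (fun a => decide (a ≠ xs.foldr min x))) = x :: xs :=
      List.takeWhile_append_dropWhile ..
    have h1 : ((x :: xs).dropWhile (fun a => decide (a ≠ xs.foldr min x))) ≠ [] := by
      intro h
      apply hβ
      rw [h]
      rfl
    have h2 := congrArg List.length h0
    simp only [List.length_append, List.length_cons] at h2
    have h3 : 0 < ((x :: xs).dropWhile (fun a => decide (a ≠ xs.foldr min x))).length :=
      List.length_pos_iff.mpr h1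
    simp only [List.length_cons]
    omega

/-- `ini w` is the first letter of `w`. -/
def ini (w : List ℕ) : ℕ := w.headD 0

/-- The word of a permutation `π ∈ S_n`, namely `π(1) π(2) … π(n)`
(with values in `{1, …, n}`). -/
def permList {n : ℕ} (π : Equiv.Perm (Fin n)) : List ℕ :=
  List.ofFn fun i => (π i : ℕ) + 1

/-- The bijection `φ`: `φ(π) = f(π(1), f(π(2), ⋯ f(π(n), ∅) ⋯ ))`. -/
def phiW (w : List ℕ) : List ℕ := w.foldr fkt []

/-- Helper: `decRun l` splits `l` into its maximal weakly decreasing prefix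
and the rest. -/
def decRun : List ℕ → List ℕ × List ℕ
  | [] => ([], [])
  | [x] => ([x], [])
  | x :: y :: rest =>
    if y ≤ x then ((x :: (decRun (y :: rest)).1), (decRun (y :: rest)).2)
    else ([x], y :: rest)

theorem decRun_append : ∀ l : List ℕ, (decRun l).1 ++ (decRun l).2 = l
  | [] => rfl
  | [x] => rfl
  | x :: y :: rest => by
    rw [decRun]
    split
    · simpa using decRun_append (y :: rest)
    · rfl

/-- Helper computing the hook factorization of a word from its reversal: the
rightmost hook of the word starts at its rightmost descent top, i.e. it is
obtained by extending the maximal weakly decreasing prefix of the reversed word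
by one more letter; the process is repeated on what remains, and when no
letters usable for a hook remain the word left over is the increasing part
`π₀`. The result is `(π₀, [π₁, …, π_k])`. -/
def hookRev (r : List ℕ) : List ℕ × List (List ℕ) :=
  match h : (decRun r).2 with
  | [] => (r.reverse, [])
  | z :: rest =>
    ((hookRev rest).1, (hookRev rest).2 ++ [z :: (decRun r).1.reverse])
termination_by r.length
decreasing_by
  have h2 := congrArg List.length (decRun_append r)
  rw [h] at h2
  simp only [List.length_append, List.length_cons] at h2
  omega

/-- The hook factorization `(π₀, [π₁, …, π_k])` of a word
`w = π₀ π₁ ⋯ π_k`, where `π₀` is increasing and each `π_i`, `i ≥ 1`, is a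
hook. -/
def hookSplit (w : List ℕ) : List ℕ × List (List ℕ) := hookRev w.reverse

/-- `pix w` is the length of the initial increasing factor `π₀` in the hook
factorization of `w`. -/
def pix (w : List ℕ) : ℕ := (hookSplit w).1.length

/-- `lec w` is the sum of the numbers of inversions of the hooks in the hook
factorization of `w`. -/
def lec (w : List ℕ) : ℕ := ((hookSplit w).2.map inv).sum

/-- A word `w(1) … w(r)` with `r ≥ 2` is a hook if
`w(1) > w(2) ≤ w(3) ≤ ⋯ ≤ w(r)`. -/
def IsHook (w : List ℕ) : Prop :=
  ∃ a b rest, w = a :: b :: rest ∧ b < a ∧ List.Chain' (· ≤ ·) (b :: rest)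

/-- `w(i)` is a left-to-right maximum of `w` if `w(k) < w(i)` for all `k < i`. -/
def IsLRMax (w : List ℕ) (i : ℕ) : Prop := ∀ k < i, w.getD k 0 < w.getD i 0

instance (w : List ℕ) (i : ℕ) : Decidable (IsLRMax w i) := by
  unfold IsLRMax; infer_instance

/-- `mix w` counts the pairs of positions `i < j` such that either
`w(i) > w(j)` and `w(i)` is a left-to-right maximum, or `w(i) < w(j)` and
there is `k < i` with `w(k) > w(j)`. -/
def mix (w : List ℕ) : ℕ :=
  ((Finset.range w.length ×ˢ Finset.range w.length).filter fun p =>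
    p.1 < p.2 ∧ ((w.getD p.2 0 < w.getD p.1 0 ∧ IsLRMax w p.1) ∨
      (w.getD p.1 0 < w.getD p.2 0 ∧ ∃ k ∈ Finset.range p.1, w.getD p.2 0 < w.getD k 0))).card

/-- `das w` counts the positions `i` such that either `w(i) > w(i+1)` and
`w(i)` is a left-to-right maximum, or `w(i) < w(i+1)` and there is `k < i`
with `w(k) > w(i+1)`. -/
def das (w : List ℕ) : ℕ :=
  ((Finset.range (w.length - 1)).filter fun i =>
    (w.getD (i + 1) 0 < w.getD i 0 ∧ IsLRMax w i) ∨
      (w.getD i 0 < w.getD (i + 1) 0 ∧ ∃ k ∈ Finset.range i, w.getD (i + 1) 0 < w.getD k 0)).card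

/-- The values of the left-to-right maxima of a word, listed in increasing
order (which is also their order of occurrence). -/
def lrMaxima : List ℕ → List ℕ
  | [] => []
  | x :: xs => x :: lrMaxima (xs.filter fun a => decide (x < a))
termination_by l => l.length
decreasing_by
  have := xs.length_filter_le (fun a => decide (x < a))
  simp only [List.length_cons, List.length_unattach, List.filter_attach xs (fun a => decide (x < a)), List.length_map,
    List.length_attach]
  omega

/-- `Bset w m` is the list of entries of `w` that are smaller than `m` and lie
to the right of (the first occurrence of) `m` in `w`. -/
def Bset (w : List ℕ) (m : ℕ) : List ℕ :=
  ((w.dropWhile fun a => decide (a ≠ m)).tail).filter fun a => decide (a < m)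

/-- Helper for `psiS`: replace the letters satisfying `P`, in order, by the
letters of the first list. -/
def replaceSub (P : ℕ → Bool) : List ℕ → List ℕ → List ℕ
  | _, [] => []
  | rs, x :: xs =>
    if P x then rs.headD x :: replaceSub P rs.tail xs else x :: replaceSub P rs xs

/-- `psiS S w` is `ψ_S(w)`: the result of reversing, in place, the subword of
`w` consisting of the entries belonging to `S`. -/
def psiS (S : List ℕ) (w : List ℕ) : List ℕ :=
  replaceSub (fun a => decide (a ∈ S)) ((w.filter fun a => decide (a ∈ S)).reverse) w

/-- Helper applying the alternating composition
`ψ_{B₁} ∘ ψ_{B₂ ∩ B₁} ∘ ψ_{B₂} ∘ ⋯ ∘ ψ_{B_{k-1}} ∘ ψ_{B_k ∩ B_{k-1}} ∘ ψ_{B_k}`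
to `w`, given the list `[B_k, B_{k-1}, …, B₁]`. -/
def psiChain : List (List ℕ) → List ℕ → List ℕ
  | [], w => w
  | [B], w => psiS B w
  | B :: B' :: rest, w => psiChain (B' :: rest) (psiS (B.inter B') (psiS B w))

/-- The Brändén–Claesson bijection `ψ`. -/
def psi (w : List ℕ) : List ℕ :=
  psiChain (((lrMaxima w).map (Bset w)).reverse) w

/-! Prepending `k` to `τ` only touches the increasing prefix `π₀` of the hook factorization
`τ = π₀ π₁ ⋯ π_m`. If `π₀` is empty or `k` does not exceed its first letter, `kπ₀` is the new
increasing prefix and the hooks are unchanged: `pix` grows by one and `lec` is constant.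
Otherwise `kπ₀` is itself a hook, so the new prefix is empty and `lec` grows by
`inv (kπ₀) ≥ 1`. Since `hookSplit` reads the word from the right, this is proved for `hookRev`
by appending `k` to the reversed word. -/

theorem decRun_append_singleton_of_snd_ne_nil (r : List ℕ) (k : ℕ) (h : (decRun r).2 ≠ []) :
    decRun (r ++ [k]) = ((decRun r).1, (decRun r).2 ++ [k]) := by
  match r with
  | [] | [_] => simp [decRun] at h
  | x :: y :: rest =>
    rw [decRun] at h
    rw [List.cons_append, List.cons_append, decRun, decRun]
    by_cases hyx : y ≤ x
    · simp only [hyx, if_true] at h ⊢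
      rw [← List.cons_append, decRun_append_singleton_of_snd_ne_nil (y :: rest) k h]
    · simp [hyx]

/-- `(decRun r).2 = []` says that `r` is weakly decreasing. -/
theorem decRun_append_singleton_of_snd_eq_nil (r : List ℕ) (k : ℕ) (h : (decRun r).2 = []) :
    decRun (r ++ [k]) = if k ≤ r.getLastD k then (r ++ [k], []) else (r, [k]) := by
  match r with
  | [] | [_] => simp [decRun]
  | x :: y :: rest =>
    rw [decRun] at h
    by_cases hyx : y ≤ x
    · simp only [hyx, if_true] at h
      rw [List.cons_append, List.cons_append, decRun, if_pos hyx, ← List.cons_append,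
        decRun_append_singleton_of_snd_eq_nil (y :: rest) k h]
      simp only [List.getLastD_cons]
      split <;> rfl
    · simp [hyx] at h

theorem hookRev_of_snd_eq_nil (r : List ℕ) (h : (decRun r).2 = []) :
    hookRev r = (r.reverse, []) := by
  rw [hookRev]
  split <;> simp_all

theorem hookRev_of_snd_eq_cons (r : List ℕ) (z : ℕ) (rest : List ℕ)
    (h : (decRun r).2 = z :: rest) :
    hookRev r = ((hookRev rest).1, (hookRev rest).2 ++ [z :: (decRun r).1.reverse]) := by
  rw [hookRev]
  split <;> simp_all

theorem hookRev_append_singleton (r : List ℕ) (k : ℕ) :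
    hookRev (r ++ [k]) =
      if k ≤ (hookRev r).1.headD k then (k :: (hookRev r).1, (hookRev r).2)
      else ([], (k :: (hookRev r).1) :: (hookRev r).2) := by
  match h : (decRun r).2 with
  | [] =>
    have hdec := decRun_append_singleton_of_snd_eq_nil r k h
    have hhead : r.reverse.headD k = r.getLastD k := by simp
    rw [hookRev_of_snd_eq_nil r h, hhead]
    split_ifs with hk
    · rw [if_pos hk] at hdec
      rw [hookRev_of_snd_eq_nil _ (by rw [hdec]), List.reverse_append]
      rfl
    · rw [if_neg hk] at hdec
      rw [hookRev_of_snd_eq_cons _ k [] (by rw [hdec]), hdec, hookRev_of_snd_eq_nil [] rfl]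
      rfl
  | z :: rest =>
    have hdec := decRun_append_singleton_of_snd_ne_nil r k (by simp [h])
    rw [h] at hdec
    rw [hookRev_of_snd_eq_cons (r ++ [k]) z (rest ++ [k]) (by rw [hdec]; rfl), hdec,
      hookRev_append_singleton rest k, hookRev_of_snd_eq_cons r z rest h]
    split_ifs <;> simp
termination_by r.length
decreasing_by
  have hlen := congrArg List.length (decRun_append r)
  rw [h] at hlen
  simp only [List.length_append, List.length_cons] at hlen
  omega

theorem hookSplit_cons (k : ℕ) (w : List ℕ) :
    hookSplit (k :: w) =
      if k ≤ (hookSplit w).1.headD k then (k :: (hookSplit w).1, (hookSplit w).2)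
      else ([], (k :: (hookSplit w).1) :: (hookSplit w).2) := by
  rw [hookSplit, List.reverse_cons, hookRev_append_singleton, hookSplit]

theorem one_le_inv_of_lt {a b : ℕ} (t : List ℕ) (hba : b < a) : 1 ≤ inv (a :: b :: t) :=
  Finset.card_pos.mpr ⟨(0, 1), by simp [hba]⟩

theorem lec_cons_iff_pix_general (k : ℕ) (τ : List ℕ) :
    lec τ ≤ lec (k :: τ) ∧
    (lec (k :: τ) = lec τ ↔ pix (k :: τ) = pix τ + 1) ∧
    (lec τ < lec (k :: τ) ↔ pix (k :: τ) = 0) := by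
  unfold lec pix
  rw [hookSplit_cons]
  obtain ⟨π₀, hooks⟩ := hookSplit τ
  by_cases hk : k ≤ π₀.headD k
  · rw [if_pos hk]
    simp
  · rw [if_neg hk]
    obtain ⟨a, t, rfl⟩ := List.exists_cons_of_ne_nil (l := π₀) (by rintro rfl; exact hk le_rfl)
    rw [List.headD_cons, not_le] at hk
    have hinv := one_le_inv_of_lt t hk
    simp only [List.map_cons, List.sum_cons, List.length_nil, List.length_cons, iff_true]
    omega

/-- `lec(kτ) ≥ lec τ`; moreover `lec(kτ) = lec τ` iff
`pix(kτ) = pix τ + 1` (in particular `pix(kτ) > 0`), and `lec(kτ) > lec τ` iff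
`pix(kτ) = 0`. -/
theorem lec_cons_iff_pix (k : ℕ) (τ : List ℕ) (hτ : τ.Nodup) (hk : k ∉ τ) :
    lec τ ≤ lec (k :: τ) ∧
    (lec (k :: τ) = lec τ ↔ pix (k :: τ) = pix τ + 1) ∧
    (lec τ < lec (k :: τ) ↔ pix (k :: τ) = 0) :=
  lec_cons_iff_pix_general k τ

end PaperStats
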